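/- arXiv:1301.1197 — 6 statements merged into one kernel-verified Lean document; each statement's English description precedes it below -/
import Mathlib

section
/- Let X be a Polish space and let E be an equivalence relation on X which is closed as a subset of X × X. Then E is smooth: there exists a Borel (measurable) map f : X → (ℕ → Bool) such that for all x, y ∈ X, x E y if and only if f(x) = f(y). -/
/-!
Lusin separation descends to the quotient by a Borel equivalence relation. The saturation of a
Borel set is analytic, so to separate disjoint invariant analytic sets `A` and `B` one can start
from a Borel set containing `A` and missing `B`, then repeatedly saturate and separate the saturation from `B` again: the union
of the resulting sequence is an invariant Borel separator. For a closed relation, two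
inequivalent points lie in a basic open rectangle missing the relation, whose sides have disjoint
saturations; the invariant Borel sets separating these countably many pairs of basic sets separate
the points of the quotient, which therefore injects measurably into `ℕ → Bool`.
-/

open Set MeasureTheory TopologicalSpace

section

variable {X : Type*} [TopologicalSpace X] [PolishSpace X] [MeasurableSpace X] [BorelSpace X]
  {s : Setoid X}

theorem analyticSet_preimage_image_quotientMk (hs : MeasurableSet {p : X × X | s p.1 p.2})
    {S : Set X} (hS : MeasurableSet S) :
    AnalyticSet (Quotient.mk s ⁻¹' (Quotient.mk s '' S)) := by
  have h : Quotient.mk s ⁻¹' (Quotient.mk s '' S) =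
      Prod.fst '' ({p : X × X | s p.1 p.2} ∩ Prod.snd ⁻¹' S) := by
    ext x
    constructor
    · rintro ⟨y, hy, hyx⟩
      exact ⟨(x, y), ⟨Quotient.exact hyx.symm, hy⟩, rfl⟩
    · rintro ⟨⟨x, y⟩, ⟨hxy, hy⟩, rfl⟩
      exact ⟨y, hy, (Quotient.sound hxy).symm⟩
  rw [h]
  exact (hs.inter (measurable_snd hS)).analyticSet.image_of_continuous continuous_fst

theorem measurablySeparable_quotient (hs : MeasurableSet {p : X × X | s p.1 p.2})
    {A B : Set (Quotient s)} (hA : AnalyticSet (Quotient.mk s ⁻¹' A))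
    (hB : AnalyticSet (Quotient.mk s ⁻¹' B)) (hAB : Disjoint A B) :
    MeasurablySeparable A B := by
  set π : X → Quotient s := Quotient.mk s
  have separate : ∀ D : Set X, AnalyticSet D → Disjoint D (π ⁻¹' B) →
      ∃ D', (MeasurableSet D' ∧ Disjoint D' (π ⁻¹' B)) ∧ D ⊆ D' := by
    intro D hD hDB
    obtain ⟨D', hDD', hBD', hD'⟩ := hD.measurablySeparable hB hDB
    exact ⟨D', ⟨hD', hBD'.symm⟩, hDD'⟩
  obtain ⟨D₀, hD₀, hAD₀⟩ := separate _ hA (hAB.preimage π)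
  have step : ∀ D, MeasurableSet D ∧ Disjoint D (π ⁻¹' B) →
      ∃ D', (MeasurableSet D' ∧ Disjoint D' (π ⁻¹' B)) ∧ π ⁻¹' (π '' D) ⊆ D' :=
    fun D hD ↦ separate _ (analyticSet_preimage_image_quotientMk hs hD.1)
      ((disjoint_image_left.2 hD.2).preimage π)
  choose! F hF hsatF using step
  set D : ℕ → Set X := fun n ↦ F^[n] D₀
  have hD : ∀ n, MeasurableSet (D n) ∧ Disjoint (D n) (π ⁻¹' B) :=
    Function.Iterate.rec (fun D ↦ MeasurableSet D ∧ Disjoint D (π ⁻¹' B)) hD₀ hF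
  have hsat : ∀ n, π ⁻¹' (π '' D n) ⊆ D (n + 1) := fun n ↦ by
    simpa only [D, Function.iterate_succ_apply'] using hsatF _ (hD n)
  -- the saturations are squeezed between consecutive terms of `D`
  have hpreimage : π ⁻¹' (π '' ⋃ n, D n) = ⋃ n, D n := by
    rw [image_iUnion, preimage_iUnion]
    refine (iUnion_mono' fun n ↦ ⟨n + 1, hsat n⟩).antisymm ?_
    exact iUnion_mono fun n ↦ subset_preimage_image π (D n)
  refine ⟨π '' ⋃ n, D n, ?_, ?_, ?_⟩
  · calc A = π '' (π ⁻¹' A) := (image_preimage_eq A Quotient.mk_surjective).symm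
      _ ⊆ π '' ⋃ n, D n := image_mono (hAD₀.trans (subset_iUnion D 0))
  · rw [disjoint_comm, disjoint_image_left, disjoint_iUnion_left]
    exact fun n ↦ (hD n).2
  · rw [measurableSet_quotient]
    change MeasurableSet (π ⁻¹' (π '' ⋃ n, D n))
    rw [hpreimage]
    exact MeasurableSet.iUnion fun n ↦ (hD n).1

theorem countablySeparated_quotient_of_isClosed (hs : IsClosed {p : X × X | s p.1 p.2}) :
    MeasurableSpace.CountablySeparated (Quotient s) := by
  set π : X → Quotient s := Quotient.mk s
  have key : ∀ U ∈ countableBasis X, ∀ V ∈ countableBasis X, ∃ C : Set (Quotient s),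
      MeasurableSet C ∧ (Disjoint (π '' U) (π '' V) → π '' U ⊆ C ∧ Disjoint (π '' V) C) := by
    intro U hU V hV
    by_cases hUV : Disjoint (π '' U) (π '' V)
    · have hsat {W} (hW : W ∈ countableBasis X) := analyticSet_preimage_image_quotientMk
        hs.measurableSet (isOpen_of_mem_countableBasis hW).measurableSet
      obtain ⟨C, hUC, hVC, hC⟩ := measurablySeparable_quotient hs.measurableSet
        (hsat hU) (hsat hV) hUV
      exact ⟨C, hC, fun _ ↦ ⟨hUC, hVC⟩⟩
    · exact ⟨∅, MeasurableSet.empty, fun h ↦ absurd h hUV⟩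
  choose! C hC hsep using key
  refine ⟨⟨image2 C (countableBasis X) (countableBasis X),
    (countable_countableBasis X).image2 (countable_countableBasis X) C,
    forall_mem_image2.2 hC, ?_⟩⟩
  rintro ⟨x⟩ - ⟨y⟩ - hxy
  by_contra hne
  obtain ⟨_, ⟨U, hU, V, hV, rfl⟩, ⟨hxU, hyV⟩, hUV⟩ :=
    ((isBasis_countableBasis X).prod (isBasis_countableBasis X)).exists_subset_of_mem_open
      (show (x, y) ∈ {p : X × X | s p.1 p.2}ᶜ from fun h ↦ hne (Quotient.sound h))
      hs.isOpen_compl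
  have hdisj : Disjoint (π '' U) (π '' V) := by
    rw [disjoint_left]
    rintro _ ⟨u, hu, rfl⟩ ⟨v, hv, huv⟩
    exact hUV (mk_mem_prod hu hv) (Quotient.exact huv.symm)
  obtain ⟨hUC, hVC⟩ := hsep U hU V hV hdisj
  have hxC : π x ∈ C U V := hUC (mem_image_of_mem π hxU)
  exact disjoint_left.1 hVC (mem_image_of_mem π hyV) ((hxy _ (mem_image2_of_mem hU hV)).1 hxC)

end

/-- A closed equivalence relation on a Polish space is smooth. -/
theorem stmt_0 {X : Type*} [TopologicalSpace X] [PolishSpace X]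
    [MeasurableSpace X] [BorelSpace X]
    (E : X → X → Prop) (hE : Equivalence E)
    (hclosed : IsClosed {p : X × X | E p.1 p.2}) :
    ∃ f : X → (ℕ → Bool), Measurable f ∧ ∀ x y : X, E x y ↔ f x = f y := by
  let s : Setoid X := ⟨E, hE⟩
  have := countablySeparated_quotient_of_isClosed (s := s) hclosed
  obtain ⟨g, hg, hinj⟩ := MeasurableSpace.measurable_injection_nat_bool_of_countablySeparated
    (Quotient s)
  refine ⟨g ∘ Quotient.mk s, hg.comp measurable_quotient_mk'', fun x y ↦ ?_⟩
  exact Quotient.eq.symm.trans hinj.eq_iff.symm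
end

section
/- Every subset B of the Cantor space 2^ℕ which has the Baire property and is E₀-invariant (i.e., is a union of E₀-classes) is either meager or comeager. -/
/-! Suppose `B` is not meager, so the open set `U` with `B △ U` meager is nonempty and contains a
cylinder `C`, on which `Bᶜ` is meager. Flipping finitely many coordinates is a homeomorphism of
Cantor space that preserves every `E₀`-class, and countably many such flips carry `C` onto
cylinders covering the whole space. Hence the `E₀`-invariant set `Bᶜ` is meager everywhere. -/

/-- `E₀`: eventual equality on Cantor space. -/
def E0 (x y : ℕ → Bool) : Prop := ∃ N : ℕ, ∀ n ≥ N, x n = y n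

open PiNat

def E0Invariant (A : Set (ℕ → Bool)) : Prop :=
  ∀ x y : ℕ → Bool, E0 x y → (x ∈ A ↔ y ∈ A)

theorem E0Invariant.compl {A : Set (ℕ → Bool)} (hA : E0Invariant A) : E0Invariant Aᶜ :=
  fun x y hxy => not_congr (hA x y hxy)

namespace CantorSpace

def flipOn (s : Finset ℕ) (y : ℕ → Bool) : ℕ → Bool :=
  fun i => if i ∈ s then !y i else y i

theorem flipOn_involutive (s : Finset ℕ) : Function.Involutive (flipOn s) := fun y => by
  funext i
  by_cases hi : i ∈ s <;> simp [flipOn, hi]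

theorem continuous_flipOn (s : Finset ℕ) : Continuous (flipOn s) :=
  continuous_pi fun i => (continuous_of_discreteTopology (f := fun b : Bool =>
    if i ∈ s then !b else b)).comp (continuous_apply i)

def flipHomeomorph (s : Finset ℕ) : (ℕ → Bool) ≃ₜ (ℕ → Bool) where
  toEquiv := (flipOn_involutive s).toPerm
  continuous_toFun := continuous_flipOn s
  continuous_invFun := continuous_flipOn s

theorem e0_flipOn (s : Finset ℕ) (y : ℕ → Bool) : E0 y (flipOn s y) := by
  obtain ⟨N, hN⟩ := s.exists_nat_subset_range
  refine ⟨N, fun n hn => ?_⟩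
  have : n ∉ s := fun h => (Finset.mem_range.mp (hN h)).not_ge hn
  simp [flipOn, this]

theorem flipOn_mem_cylinder (x y : ℕ → Bool) (n : ℕ) :
    flipOn ((Finset.range n).filter fun i => y i ≠ x i) y ∈ cylinder x n := by
  intro i hi
  simp only [flipOn, Finset.mem_filter, Finset.mem_range, hi, true_and]
  cases y i <;> cases x i <;> simp

end CantorSpace

open CantorSpace

theorem E0Invariant.isMeagre_of_isMeagre_inter_cylinder {A : Set (ℕ → Bool)}
    (hA : E0Invariant A) {x : ℕ → Bool} {n : ℕ} (hAC : IsMeagre (A ∩ cylinder x n)) :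
    IsMeagre A := by
  have hcover : A ⊆ ⋃ s : Finset ℕ, flipHomeomorph s ⁻¹' (A ∩ cylinder x n) := fun y hy =>
    Set.mem_iUnion.mpr ⟨_, (hA _ _ (e0_flipOn _ y)).mp hy, flipOn_mem_cylinder x y n⟩
  refine (isMeagre_iUnion fun s => ?_).mono hcover
  exact hAC.preimage_of_isOpenMap (flipHomeomorph s).continuous (flipHomeomorph s).isOpenMap

theorem E0Invariant.isMeagre_of_isMeagre_inter_isOpen {A U : Set (ℕ → Bool)}
    (hA : E0Invariant A) (hU : IsOpen U) (hUne : U.Nonempty) (hAU : IsMeagre (A ∩ U)) :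
    IsMeagre A := by
  obtain ⟨x, hxU⟩ := hUne
  obtain ⟨_, ⟨y, n, rfl⟩, -, hCU⟩ :=
    (isTopologicalBasis_cylinders fun _ => Bool).exists_subset_of_mem_open hxU hU
  exact hA.isMeagre_of_isMeagre_inter_cylinder (hAU.mono (Set.inter_subset_inter_right A hCU))

/-- every E₀-invariant subset of Cantor space with the Baire
property is meager or comeager. -/
theorem stmt_1 (B : Set (ℕ → Bool))
    (hBP : ∃ U : Set (ℕ → Bool), IsOpen U ∧ IsMeagre (symmDiff B U))
    (hinv : ∀ x y : ℕ → Bool, E0 x y → (x ∈ B ↔ y ∈ B)) :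
    IsMeagre B ∨ IsMeagre Bᶜ := by
  obtain ⟨U, hU, hBU⟩ := hBP
  rcases U.eq_empty_or_nonempty with rfl | hUne
  · left
    rwa [← Set.bot_eq_empty, symmDiff_bot] at hBU
  · right
    refine (E0Invariant.compl hinv).isMeagre_of_isMeagre_inter_isOpen hU hUne (hBU.mono ?_)
    rintro y ⟨hyB, hyU⟩
    exact Or.inr ⟨hyU, hyB⟩
end

section
/- Suppose X is a perfect Polish space (a nonempty Polish space with no isolated points), Γ is a group of homeomorphisms of X having a dense orbit (there is x₀ ∈ X with {γ(x₀) : γ ∈ Γ} dense in X), and R ⊆ X × X is a meager set. Then there exists a continuous injective map φ : 2^ℕ → X such that for all y, z ∈ 2^ℕ: if y E₀ z then there is γ ∈ Γ with γ(φ(y)) = φ(z), and if ¬(y E₀ z) then (φ(y), φ(z)) ∉ R. -/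
/-- A group of homeomorphisms of `X`: a subgroup of the group of
self-homeomorphisms of `X` under composition. -/
def IsHomeoGroup {X : Type*} [TopologicalSpace X] (Γ : Set (X ≃ₜ X)) : Prop :=
  Homeomorph.refl X ∈ Γ ∧ (∀ γ ∈ Γ, γ.symm ∈ Γ) ∧
    ∀ γ₁ ∈ Γ, ∀ γ₂ ∈ Γ, γ₁.trans γ₂ ∈ Γ

open Set Filter Topology Metric PiNat CantorScheme
open scoped ENNReal

theorem exists_seq_of_forall_exists_step {α : Type*} {p : α → Prop} {r : ℕ → α → α → Prop}
    {a : α} (ha : p a) (h : ∀ n a, p a → ∃ b, p b ∧ r n a b) :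
    ∃ f : ℕ → α, f 0 = a ∧ ∀ n, p (f n) ∧ r n (f n) (f (n + 1)) := by
  choose! next hnext using h
  let f : ℕ → α := fun n => Nat.rec (motive := fun _ => α) a next n
  have hp : ∀ n, p (f n) := fun n => Nat.rec ha (fun n ih => (hnext n _ ih).1) n
  exact ⟨f, rfl, fun n => ⟨hp n, (hnext n _ (hp n)).2⟩⟩

section Topology

variable {X Y : Type*} [TopologicalSpace X] [TopologicalSpace Y]

theorem Set.Finite.dense_biInter {ι : Type*} {s : Set ι} {f : ι → Set X} (hs : s.Finite)
    (ho : ∀ i ∈ s, IsOpen (f i)) (hd : ∀ i ∈ s, Dense (f i)) : Dense (⋂ i ∈ s, f i) := by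
  rw [← sInter_image]
  exact (hs.image f).dense_sInter (forall_mem_image.2 ho) (forall_mem_image.2 hd)

theorem IsMeagre.exists_antitone_isOpen_dense {s : Set X} (hs : IsMeagre s) :
    ∃ O : ℕ → Set X, Antitone O ∧ (∀ n, IsOpen (O n)) ∧ (∀ n, Dense (O n)) ∧
      Disjoint s (⋂ n, O n) := by
  obtain ⟨S, hSo, hSd, hSc, hS⟩ := mem_residual_iff.1 hs
  obtain ⟨f, hf⟩ := (hSc.insert univ).exists_eq_range (insert_nonempty _ _)
  have hfS : ∀ i, f i ∈ insert univ S := fun i => hf ▸ mem_range_self i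
  have hfo : ∀ i, IsOpen (f i) := fun i => (hfS i).elim (· ▸ isOpen_univ) (hSo _)
  have hfd : ∀ i, Dense (f i) := fun i => (hfS i).elim (· ▸ dense_univ) (hSd _)
  refine ⟨fun n => ⋂ i ∈ Iic n, f i,
    fun m n hmn => biInter_subset_biInter_left (Iic_subset_Iic.2 hmn),
    fun n => (finite_Iic n).isOpen_biInter fun i _ => hfo i,
    fun n => (finite_Iic n).dense_biInter (fun i _ => hfo i) fun i _ => hfd i, ?_⟩
  refine subset_compl_iff_disjoint_left.1 fun x hx => hS fun t ht => ?_
  obtain ⟨i, rfl⟩ : t ∈ range f := hf ▸ mem_insert_of_mem _ ht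
  exact mem_iInter₂.1 (mem_iInter.1 hx i) i (mem_Iic.2 le_rfl)

theorem Dense.exists_prod_subset {D : Set (X × Y)} (hD : Dense D) (hDo : IsOpen D) {V : Set X}
    {W : Set Y} (hV : IsOpen V) (hW : IsOpen W) (hVne : V.Nonempty) (hWne : W.Nonempty) :
    ∃ V' W', IsOpen V' ∧ IsOpen W' ∧ V'.Nonempty ∧ W'.Nonempty ∧ V' ⊆ V ∧ W' ⊆ W ∧
      V' ×ˢ W' ⊆ D := by
  obtain ⟨⟨a, b⟩, ⟨haV, hbW⟩, hab⟩ := hD.inter_open_nonempty _ (hV.prod hW) (hVne.prod hWne)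
  obtain ⟨V', W', hV', hW', haV', hbW', hsub⟩ :=
    isOpen_prod_iff.1 ((hV.prod hW).inter hDo) a b ⟨⟨haV, hbW⟩, hab⟩
  exact ⟨V', W', hV', hW', ⟨a, haV'⟩, ⟨b, hbW'⟩, fun x hx => (hsub (mk_mem_prod hx hbW')).1.1,
    fun y hy => (hsub (mk_mem_prod haV' hy)).1.2, fun p hp => (hsub hp).2⟩

theorem IsOpen.exists_disjoint_isOpen_subset [T2Space X] (hperf : ∀ x : X, ¬IsOpen ({x} : Set X))
    {U : Set X} (hU : IsOpen U) (hne : U.Nonempty) :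
    ∃ V W, IsOpen V ∧ IsOpen W ∧ V.Nonempty ∧ W.Nonempty ∧ V ⊆ U ∧ W ⊆ U ∧ Disjoint V W := by
  obtain ⟨a, ha⟩ := hne
  obtain ⟨b, hb, hba⟩ : ∃ b ∈ U, b ≠ a := by
    by_contra! h
    exact hperf a ((Set.Nonempty.subset_singleton_iff ⟨a, ha⟩).1 h ▸ hU)
  obtain ⟨V, W, hV, hW, hbV, haW, hVW⟩ := t2_separation hba
  exact ⟨U ∩ V, U ∩ W, hU.inter hV, hU.inter hW, ⟨b, hb, hbV⟩, ⟨a, ha, haW⟩, inter_subset_left,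
    inter_subset_left, hVW.mono inter_subset_right inter_subset_right⟩

theorem exists_isOpen_closure_subset_ediam_image_le [RegularSpace X] {Z : Type*}
    [PseudoEMetricSpace Z] {F : Set (X → Z)} (hF : F.Finite) (hc : ∀ f ∈ F, Continuous f)
    {U : Set X} {x : X} (hU : IsOpen U) (hx : x ∈ U) {ε : ℝ≥0∞} (hε : 0 < ε) :
    ∃ V, IsOpen V ∧ x ∈ V ∧ closure V ⊆ U ∧ ∀ f ∈ F, ediam (f '' closure V) ≤ ε := by
  have hW : U ∩ ⋂ f ∈ F, f ⁻¹' eball (f x) (ε / 2) ∈ 𝓝 x :=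
    (hU.inter (hF.isOpen_biInter fun f hf => isOpen_eball.preimage (hc f hf))).mem_nhds
      ⟨hx, mem_iInter₂.2 fun f _ => mem_eball_self (ENNReal.half_pos hε.ne')⟩
  obtain ⟨V, ⟨hxV, hV⟩, hVW⟩ := (hasBasis_opens_closure x).mem_iff.1 hW
  refine ⟨V, hV, hxV, fun a ha => (hVW ha).1, fun f hf => ediam_image_le_iff.2 fun a ha b hb => ?_⟩
  have hball : ∀ c ∈ closure V, edist (f c) (f x) < ε / 2 :=
    fun c hc => mem_iInter₂.1 (hVW hc).2 f hf
  calc edist (f a) (f b) ≤ edist (f a) (f x) + edist (f b) (f x) := edist_triangle_right _ _ _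
    _ ≤ ε / 2 + ε / 2 := add_le_add (hball a ha).le (hball b hb).le
    _ = ε := ENNReal.add_halves ε

def IsHomeoGroup.toSubgroup {Γ : Set (X ≃ₜ X)} (hΓ : IsHomeoGroup Γ) : Subgroup (X ≃ₜ X) where
  carrier := Γ
  one_mem' := hΓ.1
  mul_mem' {f g} hf hg := hΓ.2.2 g hg f hf
  inv_mem' {f} hf := hΓ.2.1 f hf

theorem IsHomeoGroup.exists_mem_apply_mem {Γ : Set (X ≃ₜ X)} (hΓ : IsHomeoGroup Γ)
    (hdense : ∃ x₀ : X, Dense {y : X | ∃ γ ∈ Γ, γ x₀ = y}) {U V : Set X} (hU : IsOpen U)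
    (hUne : U.Nonempty) (hV : IsOpen V) (hVne : V.Nonempty) : ∃ γ ∈ Γ, ∃ x ∈ U, γ x ∈ V := by
  obtain ⟨x₀, hx₀⟩ := hdense
  obtain ⟨_, hxU, γ₁, hγ₁, rfl⟩ := hx₀.inter_open_nonempty U hU hUne
  obtain ⟨_, hyV, γ₂, hγ₂, rfl⟩ := hx₀.inter_open_nonempty V hV hVne
  exact ⟨γ₂ * γ₁⁻¹, hΓ.toSubgroup.mul_mem hγ₂ (hΓ.toSubgroup.inv_mem hγ₁), γ₁ x₀, hxU,
    by simpa using hyV⟩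

end Topology

theorem CantorScheme.VanishingDiam.eq_of_eventually_mem {β α : Type*} [MetricSpace α]
    {A : List β → Set α} (hA : VanishingDiam A) {x : ℕ → β} {p q : α}
    (hp : ∀ᶠ n in atTop, p ∈ A (res x n)) (hq : ∀ᶠ n in atTop, q ∈ A (res x n)) : p = q :=
  edist_le_zero.1 <| ge_of_tendsto (hA x) <| (hp.and hq).mono fun _ h =>
    edist_le_ediam_of_mem h.1 h.2

theorem CantorScheme.exists_continuous_injective_forall_mem {β α : Type*} [TopologicalSpace β]
    [DiscreteTopology β] [PseudoMetricSpace α] [CompleteSpace α] {A : List β → Set α}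
    (hanti : ClosureAntitone A) (hdiam : VanishingDiam A) (hdisj : CantorScheme.Disjoint A)
    (hne : ∀ l, (A l).Nonempty) :
    ∃ φ : (ℕ → β) → α, Continuous φ ∧ Function.Injective φ ∧ ∀ x n, φ x ∈ A (res x n) := by
  have hdom : ∀ x, x ∈ (inducedMap A).1 :=
    fun x => (hanti.map_of_vanishingDiam hdiam hne).symm ▸ mem_univ x
  exact ⟨fun x => (inducedMap A).2 ⟨x, hdom x⟩, hdiam.map_continuous.comp
    (continuous_id.subtype_mk _), fun x y h => congrArg Subtype.val (hdisj.map_injective h),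
    fun x n => map_mem _ n⟩

section Branching

variable {X : Type*} [TopologicalSpace X]

def branch (γ : X ≃ₜ X) (b : Bool) : X ≃ₜ X := bif b then γ else 1

@[simp] theorem Homeomorph.coe_one : ⇑(1 : X ≃ₜ X) = id := rfl

@[simp] theorem branch_false (γ : X ≃ₜ X) : branch γ false = 1 := rfl

@[simp] theorem branch_true (γ : X ≃ₜ X) : branch γ true = γ := rfl

/-- `word γ (res y n) = branch (γ 0) (y 0) * ⋯ * branch (γ (n - 1)) (y (n - 1))`: the lists
are those of `PiNat.res`, whose head is the last letter. -/
def word (γ : ℕ → X ≃ₜ X) : List Bool → X ≃ₜ X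
  | [] => 1
  | b :: l => word γ l * branch (γ l.length) b

theorem word_res_succ (γ : ℕ → X ≃ₜ X) (y : ℕ → Bool) (n : ℕ) :
    word γ (res y (n + 1)) = word γ (res y n) * branch (γ n) (y n) := by
  rw [res_succ, word, res_length]

theorem Subgroup.word_mem (G : Subgroup (X ≃ₜ X)) {γ : ℕ → X ≃ₜ X} (hγ : ∀ n, γ n ∈ G) :
    ∀ l, word γ l ∈ G
  | [] => G.one_mem
  | b :: l => G.mul_mem (G.word_mem hγ l) (by cases b <;> simp [hγ, G.one_mem])

theorem word_res_mul_inv_eq (γ : ℕ → X ≃ₜ X) {y z : ℕ → Bool} {N : ℕ} (h : ∀ n ≥ N, y n = z n)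
    {n : ℕ} (hn : N ≤ n) :
    word γ (res z n) * (word γ (res y n))⁻¹ = word γ (res z N) * (word γ (res y N))⁻¹ := by
  induction n, hn using Nat.le_induction with
  | base => rfl
  | succ n hn ih =>
    rw [word_res_succ, word_res_succ, h n hn, mul_inv_rev, mul_assoc, mul_inv_cancel_left, ih]

variable [PseudoEMetricSpace X]

/-- One step of the construction. `H` is the set of words of the previous length, and the two
children of `U` are `closure V` and `γ '' closure V`. -/
structure IsSplitting (Γ : Set (X ≃ₜ X)) (O : Set (X × X)) (ε : ℝ≥0∞) (H : Set (X ≃ₜ X))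
    (U : Set X) (γ : X ≃ₜ X) (V : Set X) : Prop where
  mem : γ ∈ Γ
  isOpen : IsOpen V
  nonempty : V.Nonempty
  branch_image_subset : ∀ b, branch γ b '' closure V ⊆ U
  disjoint : Disjoint (closure V) (γ '' closure V)
  ediam_le : ∀ g ∈ H, ∀ b, ediam ((g * branch γ b) '' closure V) ≤ ε
  prod_subset : ∀ g ∈ H, ∀ h ∈ H, ∀ b c, b ≠ c →
    ((g * branch γ b) '' closure V) ×ˢ ((h * branch γ c) '' closure V) ⊆ O

end Branching

theorem exists_isSplitting {X : Type*} [EMetricSpace X] (hperf : ∀ x : X, ¬IsOpen ({x} : Set X))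
    {Γ : Set (X ≃ₜ X)} (hΓ : IsHomeoGroup Γ)
    (hdense : ∃ x₀ : X, Dense {y : X | ∃ γ ∈ Γ, γ x₀ = y})
    {O : Set (X × X)} (hO : IsOpen O) (hOd : Dense O) {ε : ℝ≥0∞} (hε : 0 < ε)
    {H : Set (X ≃ₜ X)} (hH : H.Finite) {U : Set X} (hU : IsOpen U) (hUne : U.Nonempty) :
    ∃ γ V, IsSplitting Γ O ε H U γ V := by
  obtain ⟨V₀, W₀, hV₀, hW₀, hV₀ne, hW₀ne, hV₀U, hW₀U, hVW₀⟩ :=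
    hU.exists_disjoint_isOpen_subset hperf hUne
  set O' := ⋂ p ∈ H ×ˢ H, Prod.map p.1 p.2 ⁻¹' O
  have hO'o : IsOpen O' := (hH.prod hH).isOpen_biInter fun p _ =>
    hO.preimage (p.1.continuous.prodMap p.2.continuous)
  have hO'd : Dense O' := (hH.prod hH).dense_biInter
    (fun p _ => hO.preimage (p.1.continuous.prodMap p.2.continuous))
    fun p _ => hOd.preimage (p.1.isOpenMap.prodMap p.2.isOpenMap)
  set swap := Homeomorph.prodComm X X
  obtain ⟨V₁, W₁, hV₁, hW₁, hV₁ne, hW₁ne, hV₁₀, hW₁₀, hbox⟩ :=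
    (hO'd.inter_of_isOpen_left (hO'd.preimage swap.isOpenMap) hO'o).exists_prod_subset
      (hO'o.inter (hO'o.preimage swap.continuous)) hV₀ hW₀ hV₀ne hW₀ne
  have hgood : ∀ a ∈ V₁, ∀ a' ∈ W₁, ∀ g ∈ H, ∀ h ∈ H, (g a, h a') ∈ O ∧ (g a', h a) ∈ O :=
    fun a ha a' ha' g hg h hh => ⟨mem_iInter₂.1 (hbox (mk_mem_prod ha ha')).1 (g, h) ⟨hg, hh⟩,
      mem_iInter₂.1 (hbox (mk_mem_prod ha ha')).2 (g, h) ⟨hg, hh⟩⟩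
  obtain ⟨γ, hγ, x, hxV₁, hγx⟩ := hΓ.exists_mem_apply_mem hdense hV₁ hV₁ne hW₁ hW₁ne
  obtain ⟨V, hV, hxV, hVsub, hVdiam⟩ := exists_isOpen_closure_subset_ediam_image_le
    ((hH.image2 (fun g b => g * branch γ b) finite_univ).image (⇑))
    (by simp only [forall_mem_image]; exact fun g _ => g.continuous)
    (hV₁.inter (hW₁.preimage γ.continuous)) ⟨hxV₁, hγx⟩ hε
  have hVV₁ : closure V ⊆ V₁ := fun a ha => (hVsub ha).1
  have hVW₁ : γ '' closure V ⊆ W₁ := image_subset_iff.2 fun a ha => (hVsub ha).2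
  refine ⟨γ, V, hγ, hV, ⟨x, hxV⟩, ?_, hVW₀.mono (hVV₁.trans hV₁₀) (hVW₁.trans hW₁₀),
    fun g hg b => hVdiam _ (mem_image_of_mem _ (mem_image2_of_mem hg (mem_univ b))), ?_⟩
  · rintro (_ | _) _ ⟨a, ha, rfl⟩
    · exact hV₀U (hV₁₀ (hVV₁ ha))
    · exact hW₀U (hW₁₀ (hVW₁ (mem_image_of_mem γ ha)))
  · rintro g hg h hh (_ | _) (_ | _) hbc ⟨_, _⟩ ⟨⟨a, ha, rfl⟩, ⟨a', ha', rfl⟩⟩ <;>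
      simp only [ne_eq, not_true_eq_false] at hbc
    · exact (hgood a (hVV₁ ha) (γ a') (hVW₁ (mem_image_of_mem γ ha')) g hg h hh).1
    · exact (hgood a' (hVV₁ ha') (γ a) (hVW₁ (mem_image_of_mem γ ha)) g hg h hh).2

section Scheme

variable {X : Type*} [MetricSpace X]

structure BranchingScheme (Γ : Set (X ≃ₜ X)) (O : ℕ → Set (X × X)) (ε : ℕ → ℝ≥0∞) where
  U : ℕ → Set X
  γ : ℕ → X ≃ₜ X
  H : ℕ → Set (X ≃ₜ X)
  nonempty_zero : (U 0).Nonempty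
  word_mem : ∀ l, word γ l ∈ H l.length
  isSplitting : ∀ n, IsSplitting Γ (O n) (ε n) (H n) (U n) (γ n) (U (n + 1))

namespace BranchingScheme

theorem nonempty [Nonempty X] (hperf : ∀ x : X, ¬IsOpen ({x} : Set X)) {Γ : Set (X ≃ₜ X)}
    (hΓ : IsHomeoGroup Γ) (hdense : ∃ x₀ : X, Dense {y : X | ∃ γ ∈ Γ, γ x₀ = y})
    {O : ℕ → Set (X × X)} (hO : ∀ n, IsOpen (O n)) (hOd : ∀ n, Dense (O n)) {ε : ℕ → ℝ≥0∞}
    (hε : ∀ n, 0 < ε n) : Nonempty (BranchingScheme Γ O ε) := by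
  obtain ⟨f, hf0, hf⟩ := exists_seq_of_forall_exists_step
    (p := fun s : Set X × Set (X ≃ₜ X) => IsOpen s.1 ∧ s.1.Nonempty ∧ s.2.Finite)
    (r := fun n s t => ∃ γ, IsSplitting Γ (O n) (ε n) s.2 s.1 γ t.1 ∧
      t.2 = image2 (fun g b => g * branch γ b) s.2 univ)
    (a := (univ, {1})) ⟨isOpen_univ, univ_nonempty, finite_singleton 1⟩ <| by
      rintro n ⟨U, H⟩ ⟨hU, hUne, hH⟩
      obtain ⟨γ, V, hsplit⟩ := exists_isSplitting hperf hΓ hdense (hO n) (hOd n) (hε n) hH hU hUne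
      exact ⟨(V, _), ⟨hsplit.isOpen, hsplit.nonempty, hH.image2 _ finite_univ⟩, γ, hsplit, rfl⟩
  choose γ hγ hH using fun n => (hf n).2
  refine ⟨⟨fun n => (f n).1, γ, fun n => (f n).2, by simp [hf0], ?_, hγ⟩⟩
  intro l
  induction l with
  | nil => simp [hf0, word]
  | cons b l ih => rw [word, List.length_cons, hH]; exact mem_image2_of_mem ih (mem_univ b)

variable {Γ : Set (X ≃ₜ X)} {O : ℕ → Set (X × X)} {ε : ℕ → ℝ≥0∞} (S : BranchingScheme Γ O ε)

def sets (l : List Bool) : Set X := word S.γ l '' closure (S.U l.length)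

theorem sets_cons (b : Bool) (l : List Bool) :
    S.sets (b :: l) = word S.γ l '' (branch (S.γ l.length) b '' closure (S.U (l.length + 1))) := by
  rw [sets, word, List.length_cons, ← image_comp]
  rfl

theorem isClosed_sets (l : List Bool) : IsClosed (S.sets l) :=
  (word S.γ l).isClosedMap _ isClosed_closure

theorem nonempty_sets (l : List Bool) : (S.sets l).Nonempty := by
  refine (Nonempty.mono subset_closure ?_).image _
  cases l with
  | nil => exact S.nonempty_zero
  | cons b l => exact (S.isSplitting l.length).nonempty

theorem antitone : CantorScheme.Antitone S.sets := fun l b => by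
  rw [sets_cons]
  exact image_mono (((S.isSplitting _).branch_image_subset b).trans subset_closure)

theorem closureAntitone : ClosureAntitone S.sets :=
  S.antitone.closureAntitone S.isClosed_sets

theorem disjoint : CantorScheme.Disjoint S.sets := by
  rintro l (_ | _) (_ | _) hbc <;> simp only [ne_eq, not_true_eq_false] at hbc <;>
    rw [sets_cons, sets_cons, disjoint_image_iff (word S.γ l).injective]
  · simpa using (S.isSplitting _).disjoint
  · simpa using (S.isSplitting _).disjoint.symm

theorem vanishingDiam (hε : Tendsto ε atTop (𝓝 0)) : VanishingDiam S.sets := fun x => by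
  rw [← tendsto_add_atTop_iff_nat 1]
  refine tendsto_of_tendsto_of_tendsto_of_le_of_le tendsto_const_nhds hε (fun _ => zero_le)
    fun n => ?_
  have hword := S.word_mem (res x n)
  rw [res_length] at hword
  rw [sets, word_res_succ, res_length]
  exact (S.isSplitting n).ediam_le _ hword (x n)

theorem prod_subset {b c : Bool} (hbc : b ≠ c) {l l' : List Bool} (hl : l.length = l'.length) :
    S.sets (b :: l) ×ˢ S.sets (c :: l') ⊆ O l.length := by
  have hl' := S.word_mem l'
  rw [← hl] at hl'
  simp only [sets, word, List.length_cons, ← hl]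
  exact (S.isSplitting _).prod_subset _ (S.word_mem l) _ hl' b c hbc

theorem apply_mem_of_ne {φ : (ℕ → Bool) → X} (hφ : ∀ x n, φ x ∈ S.sets (res x n))
    {y z : ℕ → Bool} {n : ℕ} (h : y n ≠ z n) : (φ y, φ z) ∈ O n := by
  have := S.prod_subset h (l := res y n) (l' := res z n) (by simp)
    (mk_mem_prod (hφ y (n + 1)) (hφ z (n + 1)))
  rwa [res_length] at this

theorem exists_mem_apply_eq_of_E0 (hΓ : IsHomeoGroup Γ) (hdiam : VanishingDiam S.sets)
    {φ : (ℕ → Bool) → X} (hφ : ∀ x n, φ x ∈ S.sets (res x n)) {y z : ℕ → Bool} (h : E0 y z) :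
    ∃ g ∈ Γ, g (φ y) = φ z := by
  obtain ⟨N, hN⟩ := h
  have hwords := hΓ.toSubgroup.word_mem fun n => (S.isSplitting n).mem
  refine ⟨word S.γ (res z N) * (word S.γ (res y N))⁻¹,
    hΓ.toSubgroup.mul_mem (hwords _) (hΓ.toSubgroup.inv_mem (hwords _)),
    hdiam.eq_of_eventually_mem (x := z) (eventually_atTop.2 ⟨N, fun n hn => ?_⟩)
      (Eventually.of_forall (hφ z))⟩
  obtain ⟨a, ha, hay⟩ := hφ y n
  rw [← word_res_mul_inv_eq S.γ hN hn, ← hay]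
  refine ⟨a, by rwa [res_length] at ha ⊢, by simp⟩

end BranchingScheme

end Scheme

/-- if `X` is a perfect Polish space, `Γ` is a group of
homeomorphisms of `X` with a dense orbit, and `R ⊆ X × X` is meager, then there
is a continuous injective homomorphism from `(E₀, ∼E₀)` to `(E_Γ, ∼R)`. -/
theorem stmt_5 {X : Type*} [TopologicalSpace X] [PolishSpace X] [Nonempty X]
    (hperf : ∀ x : X, ¬ IsOpen ({x} : Set X))
    (Γ : Set (X ≃ₜ X)) (hΓ : IsHomeoGroup Γ)
    (hdense : ∃ x₀ : X, Dense {y : X | ∃ γ ∈ Γ, γ x₀ = y})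
    (R : Set (X × X)) (hR : IsMeagre R) :
    ∃ φ : (ℕ → Bool) → X, Continuous φ ∧ Function.Injective φ ∧
      ∀ y z : ℕ → Bool,
        (E0 y z → ∃ γ ∈ Γ, γ (φ y) = φ z) ∧
        (¬ E0 y z → (φ y, φ z) ∉ R) := by
  let _ := TopologicalSpace.upgradeIsCompletelyMetrizable X
  obtain ⟨O, hOanti, hO, hOd, hRO⟩ := hR.exists_antitone_isOpen_dense
  obtain ⟨S⟩ := BranchingScheme.nonempty hperf hΓ hdense hO hOd (ε := fun n => (n : ℝ≥0∞)⁻¹)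
    fun n => ENNReal.inv_pos.2 (ENNReal.natCast_ne_top n)
  have hdiam := S.vanishingDiam ENNReal.tendsto_inv_nat_nhds_zero
  obtain ⟨φ, hφc, hφi, hφ⟩ := exists_continuous_injective_forall_mem S.closureAntitone hdiam
    S.disjoint S.nonempty_sets
  refine ⟨φ, hφc, hφi, fun y z => ⟨S.exists_mem_apply_eq_of_E0 hΓ hdiam hφ, fun hyz hyzR => ?_⟩⟩
  refine hRO.notMem_of_mem_left hyzR (mem_iInter.2 fun k => ?_)
  obtain ⟨n, hkn, hn⟩ : ∃ n ≥ k, y n ≠ z n := by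
    by_contra! h
    exact hyz ⟨k, h⟩
  exact hOanti hkn (S.apply_mem_of_ne hφ hn)
end

section
/- Suppose X is a Polish space, (R_n)_{n∈ℕ} is a sequence of F_σ subsets of X × X, Γ is a group of homeomorphisms of X, and O ⊆ X is an orbit of Γ with the property that for every n ∈ ℕ and every open set U ⊆ X intersecting O, there are distinct points x, y ∈ O ∩ U such that O ∩ {z : (x,z) ∈ R_n} ∩ {z : (y,z) ∈ R_n} = ∅. Then for each n the set (X × X \ R_n) ∩ (closure(O) × closure(O)) is dense in closure(O) × closure(O); consequently (⋃_{n∈ℕ} R_n) ∩ (closure(O) × closure(O)) is meager in the subspace closure(O) × closure(O). -/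
open Set

section

variable {Y Z : Type*} [TopologicalSpace Y] [TopologicalSpace Z]

theorem IsClosed.isMeagre_of_dense_compl {s : Set Y} (hs : IsClosed s) (hd : Dense sᶜ) :
    IsMeagre s :=
  residual_of_dense_open hs.isOpen_compl hd

theorem isMeagre_iUnion_of_isClosed_of_dense_compl {ι : Type*} [Countable ι] {F : ι → Set Y}
    (hF : ∀ k, IsClosed (F k)) (hd : Dense (⋃ k, F k)ᶜ) : IsMeagre (⋃ k, F k) :=
  isMeagre_iUnion fun k ↦
    (hF k).isMeagre_of_dense_compl (hd.mono (compl_subset_compl.mpr (subset_iUnion F k)))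

theorem dense_of_forall_isOpen_exists_mem {W : Set (Y × Z)} {E : Set Z} (hE : Dense E)
    (h : ∀ U : Set Y, IsOpen U → U.Nonempty → ∀ z ∈ E, ∃ y ∈ U, (y, z) ∈ W) : Dense W := by
  refine dense_iff_inter_open.mpr fun t ht ⟨p, hp⟩ ↦ ?_
  obtain ⟨U, V, hU, hV, hpU, hpV, hUV⟩ := isOpen_prod_iff.mp ht p.1 p.2 hp
  obtain ⟨z, hzV, hzE⟩ := hE.inter_open_nonempty V hV ⟨p.2, hpV⟩
  obtain ⟨y, hyU, hyW⟩ := h U hU ⟨p.1, hpU⟩ z hzE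
  exact ⟨(y, z), hUV ⟨hyU, hzV⟩, hyW⟩

end

theorem dense_preimage_val_closure {X : Type*} [TopologicalSpace X] (O : Set X) :
    Dense (((↑) : closure O → X) ⁻¹' O) := by
  rw [Subtype.dense_iff, image_preimage_eq_inter_range, Subtype.range_coe,
    inter_eq_left.mpr subset_closure]

theorem dense_setOf_closure_prod_mem {X : Type*} [TopologicalSpace X] {O : Set X}
    {S : Set (X × X)}
    (h : ∀ U : Set X, IsOpen U → (O ∩ U).Nonempty → ∀ z ∈ O, ∃ x ∈ O ∩ U, (x, z) ∈ S) :
    Dense {p : closure O × closure O | ((p.1 : X), (p.2 : X)) ∈ S} := by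
  refine dense_of_forall_isOpen_exists_mem (dense_preimage_val_closure O) ?_
  rintro _ hU' hne z hzO
  obtain ⟨U, hU, rfl⟩ := isOpen_induced_iff.mp hU'
  obtain ⟨w, hwU, hwO⟩ := (dense_preimage_val_closure O).inter_open_nonempty _ hU' hne
  obtain ⟨x, ⟨hxO, hxU⟩, hxz⟩ := h U hU ⟨w, hwO, hwU⟩ z hzO
  exact ⟨⟨x, subset_closure hxO⟩, hxU, hxz⟩

theorem stmt_8_general {X : Type*} [TopologicalSpace X]
    (R : ℕ → Set (X × X))
    (hR : ∀ n : ℕ, ∃ F : ℕ → Set (X × X), (∀ k, IsClosed (F k)) ∧ R n = ⋃ k, F k)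
    (O : Set X)
    (hsep : ∀ (n : ℕ) (U : Set X), IsOpen U → (O ∩ U).Nonempty →
      ∃ x ∈ O ∩ U, ∃ y ∈ O ∩ U, x ≠ y ∧
        O ∩ {z : X | (x, z) ∈ R n} ∩ {z : X | (y, z) ∈ R n} = ∅) :
    (∀ n : ℕ,
      Dense {p : ↥(closure O) × ↥(closure O) | ((p.1 : X), (p.2 : X)) ∉ R n}) ∧
    IsMeagre {p : ↥(closure O) × ↥(closure O) | ((p.1 : X), (p.2 : X)) ∈ ⋃ n, R n} := by
  have hdense (n : ℕ) :
      Dense {p : ↥(closure O) × ↥(closure O) | ((p.1 : X), (p.2 : X)) ∉ R n} := by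
    refine dense_setOf_closure_prod_mem (S := (R n)ᶜ) fun U hU hne z hzO ↦ ?_
    obtain ⟨x, hx, y, hy, -, hxy⟩ := hsep n U hU hne
    by_contra! hz
    exact eq_empty_iff_forall_notMem.mp hxy z
      ⟨⟨hzO, not_not.mp (hz x hx)⟩, not_not.mp (hz y hy)⟩
  refine ⟨hdense, ?_⟩
  let f : closure O × closure O → X × X := fun p ↦ (p.1, p.2)
  have hf : Continuous f := by fun_prop
  change IsMeagre (f ⁻¹' ⋃ n, R n)
  rw [preimage_iUnion]
  refine isMeagre_iUnion fun n ↦ ?_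
  obtain ⟨F, hF, hRF⟩ := hR n
  have hdn : Dense (f ⁻¹' R n)ᶜ := hdense n
  rw [hRF, preimage_iUnion] at hdn ⊢
  exact isMeagre_iUnion_of_isClosed_of_dense_compl (fun k ↦ (hF k).preimage hf) hdn

/-- under the hypotheses of Theorem `embedding`, each
`∼ Rₙ` is dense in `closure O × closure O`, and hence `⋃ₙ Rₙ` is meager in the
subspace `closure O × closure O`. -/
theorem stmt_8 {X : Type*} [TopologicalSpace X] [PolishSpace X]
    (R : ℕ → Set (X × X))
    (hR : ∀ n : ℕ, ∃ F : ℕ → Set (X × X), (∀ k, IsClosed (F k)) ∧ R n = ⋃ k, F k)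
    (Γ : Set (X ≃ₜ X)) (hΓ : IsHomeoGroup Γ)
    (O : Set X) (hO : ∃ x₀ : X, O = {y : X | ∃ γ ∈ Γ, γ x₀ = y})
    (hsep : ∀ (n : ℕ) (U : Set X), IsOpen U → (O ∩ U).Nonempty →
      ∃ x ∈ O ∩ U, ∃ y ∈ O ∩ U, x ≠ y ∧
        O ∩ {z : X | (x, z) ∈ R n} ∩ {z : X | (y, z) ∈ R n} = ∅) :
    (∀ n : ℕ,
      Dense {p : ↥(closure O) × ↥(closure O) | ((p.1 : X), (p.2 : X)) ∉ R n}) ∧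
    IsMeagre {p : ↥(closure O) × ↥(closure O) | ((p.1 : X), (p.2 : X)) ∈ ⋃ n, R n} :=
  stmt_8_general R hR O hsep
end

section
/- If X is a strong Choquet topological space and U ⊆ X is a nonempty G_δ subset of X, then U, with the subspace topology, is strong Choquet: player B has a winning strategy in the strong Choquet game on U. -/
/-- The history (most recent move first) of player A's first `n` moves, where
a move in the strong Choquet game is a pair (open set, point). -/
def scHist {X : Type*} (f : ℕ → Set X × X) : ℕ → List (Set X × X)
  | 0 => []
  | n + 1 => f n :: scHist f n

/-- Legality of a history of moves of player A (most recent first) in the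
strong Choquet game on `X` in which A's points are required to lie in `A`,
when player B plays according to the strategy `σ`: each move `(U, x)` must
consist of an open set `U` with `x ∈ U ∩ A`, and `U` must be contained in B's
previous move (which is `σ` applied to the previous history). -/
def SCLegal {X : Type*} [TopologicalSpace X] (A : Set X)
    (σ : List (Set X × X) → Set X) : List (Set X × X) → Prop
  | [] => True
  | (U, x) :: rest =>
      SCLegal A σ rest ∧ IsOpen U ∧ x ∈ U ∧ x ∈ A ∧ (rest ≠ [] → U ⊆ σ rest)

/-- `X` is strong Choquet over `A`: player B has a winning strategy in the
strong Choquet game on `X` where player A's chosen points lie in `A`.  A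
strategy assigns to each history of A's moves an open set for B; it is winning
if B's moves are always legal (`xₙ ∈ Vₙ ⊆ Uₙ`) and every infinite legal play
has nonempty intersection `⋂ₙ Vₙ`. -/
def StrongChoquetOver (X : Type*) [TopologicalSpace X] (A : Set X) : Prop :=
  ∃ σ : List (Set X × X) → Set X,
    (∀ (U : Set X) (x : X) (rest : List (Set X × X)),
        SCLegal A σ ((U, x) :: rest) →
          IsOpen (σ ((U, x) :: rest)) ∧ x ∈ σ ((U, x) :: rest) ∧
            σ ((U, x) :: rest) ⊆ U) ∧
    (∀ f : ℕ → Set X × X, (∀ n : ℕ, SCLegal A σ (scHist f n)) →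
        (⋂ n : ℕ, σ (scHist f (n + 1))).Nonempty)

/-
If `U = ⋂ₙ Wₙ` with `Wₙ` open and `σ` wins for B on `X`, player B plays on `U` by lifting
A's moves to `X`: an open set `V` of `U` becomes an open set of `X` with trace `V`, cut down
to `Wₙ` at round `n` and to B's previous answer, and B answers with the trace of `σ`'s reply.
The lifted play is legal, so `σ` produces a point in all its answers; these lie in every `Wₙ`,
so the point is in `U`.
-/

open Set

section OpenExtension

variable {X : Type*} [TopologicalSpace X] {U : Set X}

def openExtension (V : Set U) : Set X :=
  interior (Subtype.val '' V ∪ Uᶜ)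

lemma isOpen_openExtension (V : Set U) : IsOpen (openExtension V) :=
  isOpen_interior

lemma preimage_openExtension {V : Set U} (hV : IsOpen V) :
    Subtype.val ⁻¹' openExtension V = V := by
  refine Subset.antisymm (fun x hx => ?_) ?_
  · rcases interior_subset hx with ⟨y, hy, hyx⟩ | hxU
    · rwa [← Subtype.ext hyx]
    · exact absurd x.2 hxU
  · obtain ⟨O, hO, rfl⟩ := isOpen_induced_iff.mp hV
    refine preimage_mono (interior_maximal (fun y hy => ?_) hO)
    by_cases hyU : y ∈ U
    · exact Or.inl ⟨⟨y, hyU⟩, hy, rfl⟩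
    · exact Or.inr hyU

end OpenExtension

section Strategies

variable {X : Type*} [TopologicalSpace X]

/-- The set inside which A must play next: B's last answer, or everything before the first move. -/
def lastResponse (σ : List (Set X × X) → Set X) : List (Set X × X) → Set X
  | [] => univ
  | m :: L => σ (m :: L)

lemma scLegal_cons_iff {A : Set X} {σ : List (Set X × X) → Set X} {V : Set X} {x : X}
    {L : List (Set X × X)} :
    SCLegal A σ ((V, x) :: L) ↔
      SCLegal A σ L ∧ IsOpen V ∧ x ∈ V ∧ x ∈ A ∧ V ⊆ lastResponse σ L := by
  cases L <;> simp [SCLegal, lastResponse]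

def RespondsLegally (A : Set X) (σ : List (Set X × X) → Set X) : Prop :=
  ∀ (V : Set X) (x : X) (L : List (Set X × X)), SCLegal A σ ((V, x) :: L) →
    IsOpen (σ ((V, x) :: L)) ∧ x ∈ σ ((V, x) :: L) ∧ σ ((V, x) :: L) ⊆ V

lemma RespondsLegally.isOpen_lastResponse {A : Set X} {σ : List (Set X × X) → Set X}
    (hσ : RespondsLegally A σ) {L : List (Set X × X)} (hL : SCLegal A σ L) :
    IsOpen (lastResponse σ L) := by
  rcases L with _ | ⟨⟨V, x⟩, L⟩
  · exact isOpen_univ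
  · exact (hσ V x L hL).1

end Strategies

lemma length_scHist {X : Type*} (f : ℕ → Set X × X) (n : ℕ) : (scHist f n).length = n := by
  induction n with
  | zero => rfl
  | succ n ih => simp [scHist, ih]

section Lift

variable {X : Type*} [TopologicalSpace X] {U : Set X}
  (σ : List (Set X × X) → Set X) (W : ℕ → Set X)

/-- A's move `m` on `U`, played after the lifted history `H`, as a move on `X`. -/
def liftMove (H : List (Set X × X)) (m : Set U × U) : Set X × X :=
  (openExtension m.1 ∩ W H.length ∩ lastResponse σ H, m.2)

def liftHist : List (Set U × U) → List (Set X × X)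
  | [] => []
  | m :: L => liftMove σ W (liftHist L) m :: liftHist L

def restrictStrategy (L : List (Set U × U)) : Set U :=
  Subtype.val ⁻¹' σ (liftHist σ W L)

def liftPlay (f : ℕ → Set U × U) (n : ℕ) : Set X × X :=
  liftMove σ W (liftHist σ W (scHist f n)) (f n)

lemma length_liftHist (L : List (Set U × U)) : (liftHist σ W L).length = L.length := by
  induction L with
  | nil => rfl
  | cons m L ih => simp [liftHist, ih]

lemma lastResponse_restrictStrategy (L : List (Set U × U)) :
    lastResponse (restrictStrategy σ W) L =
      Subtype.val ⁻¹' lastResponse σ (liftHist σ W L) := by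
  cases L <;> rfl

lemma scHist_liftPlay (f : ℕ → Set U × U) (n : ℕ) :
    scHist (liftPlay σ W f) n = liftHist σ W (scHist f n) := by
  induction n with
  | zero => rfl
  | succ n ih => rw [scHist, ih]; rfl

variable {σ W} {A : Set X}

lemma scLegal_liftHist (hσ : RespondsLegally A σ) (hW : ∀ n, IsOpen (W n)) (hUW : ∀ n, U ⊆ W n)
    {L : List (Set U × U)} (hL : SCLegal (Subtype.val ⁻¹' A) (restrictStrategy σ W) L) :
    SCLegal A σ (liftHist σ W L) := by
  induction L with
  | nil => trivial
  | cons m L ih =>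
    obtain ⟨V, x⟩ := m
    obtain ⟨hL, hV, hxV, hxA, hVsub⟩ := scLegal_cons_iff.mp hL
    have hL' := ih hL
    have hxLast : (x : X) ∈ lastResponse σ (liftHist σ W L) := by
      have := hVsub hxV
      rwa [lastResponse_restrictStrategy] at this
    refine scLegal_cons_iff.mpr ⟨hL', ?_, ⟨⟨?_, hUW _ x.2⟩, hxLast⟩, hxA, inter_subset_right⟩
    · exact ((isOpen_openExtension V).inter (hW _)).inter (hσ.isOpen_lastResponse hL')
    · rwa [← preimage_openExtension hV] at hxV

lemma respondsLegally_restrictStrategy (hσ : RespondsLegally A σ) (hW : ∀ n, IsOpen (W n))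
    (hUW : ∀ n, U ⊆ W n) :
    RespondsLegally ((↑) ⁻¹' A : Set U) (restrictStrategy σ W) := by
  intro V x L hL
  have hσL := hσ _ x _ (scLegal_liftHist hσ hW hUW hL)
  refine ⟨hσL.1.preimage continuous_subtype_val, hσL.2.1, fun y hy => ?_⟩
  rw [← preimage_openExtension (scLegal_cons_iff.mp hL).2.1]
  exact (hσL.2.2 hy).1.1

lemma restrictStrategy_wins (hσ : RespondsLegally A σ)
    (hwin : ∀ g : ℕ → Set X × X, (∀ n, SCLegal A σ (scHist g n)) →
      (⋂ n, σ (scHist g (n + 1))).Nonempty)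
    (hW : ∀ n, IsOpen (W n)) (hUW : ∀ n, U ⊆ W n) (hWU : ⋂ n, W n ⊆ U)
    (f : ℕ → Set U × U)
    (hf : ∀ n, SCLegal (Subtype.val ⁻¹' A) (restrictStrategy σ W) (scHist f n)) :
    (⋂ n, restrictStrategy σ W (scHist f (n + 1))).Nonempty := by
  set g := liftPlay σ W f
  have hg : ∀ n, SCLegal A σ (scHist g n) := fun n => by
    rw [scHist_liftPlay]; exact scLegal_liftHist hσ hW hUW (hf n)
  obtain ⟨y, hy⟩ := hwin g hg
  rw [mem_iInter] at hy
  have hyW : ∀ n, y ∈ W n := fun n => by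
    have hσg := (hσ (g n).1 (g n).2 (scHist g n) (hg (n + 1))).2.2 (hy n)
    simpa only [g, liftPlay, liftMove, length_liftHist, scHist_liftPlay, length_scHist] using hσg.1.2
  have hyU : y ∈ U := hWU (mem_iInter.mpr hyW)
  refine ⟨⟨y, hyU⟩, mem_iInter.mpr fun n => ?_⟩
  have hyn := hy n
  rwa [scHist_liftPlay] at hyn

end Lift

lemma StrongChoquetOver.of_isGδ {X : Type*} [TopologicalSpace X] {A U : Set X}
    (hX : StrongChoquetOver X A) (hU : IsGδ U) :
    StrongChoquetOver U (Subtype.val ⁻¹' A) := by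
  obtain ⟨σ, hσ, hwin⟩ := hX
  obtain ⟨W, hW, hWU⟩ := hU.eq_iInter_nat
  have hUW : ∀ n, U ⊆ W n := fun n => hWU ▸ iInter_subset W n
  exact ⟨restrictStrategy σ W, respondsLegally_restrictStrategy hσ hW hUW,
    restrictStrategy_wins hσ hwin hW hUW hWU.superset⟩

theorem stmt_10_general {X : Type*} [TopologicalSpace X]
    (hX : StrongChoquetOver X Set.univ)
    (U : Set X) (hGδ : IsGδ U) :
    StrongChoquetOver ↥U Set.univ := by
  simpa using hX.of_isGδ hGδ

/-- a nonempty `Gδ` subset of a strong Choquet space is strong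
Choquet in the subspace topology. -/
theorem stmt_10 {X : Type*} [TopologicalSpace X]
    (hX : StrongChoquetOver X Set.univ)
    (U : Set X) (hGδ : IsGδ U) (hne : U.Nonempty) :
    StrongChoquetOver ↥U Set.univ :=
  stmt_10_general hX U hGδ
end

section
/- Suppose X is a regular topological space, Γ is a group of homeomorphisms of X, and O is an orbit of Γ such that X is strong Choquet over O (player B has a winning strategy in the strong Choquet game on X in which all points chosen by player A are required to lie in O). Suppose that for each n ∈ ℕ, V_n ⊆ X × X is a G_δ subset such that V_n ∩ (closure(O) × closure(O)) is dense in closure(O) × closure(O). Then there is a map φ : 2^ℕ → 𝒫(X) such that for all y, z ∈ 2^ℕ: (i) φ(y) is a nonempty closed G_δ subset of X; (ii) if y E₀ z then there is γ ∈ Γ with γ(φ(z)) = φ(y) (the image of the set φ(z) under γ equals φ(y)); (iii) if ¬(y E₀ z) then φ(y) × φ(z) ⊆ ⋂_{n∈ℕ} V_n. -/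
open Set Topology

section DenseInProduct

variable {α β : Type*} [TopologicalSpace α] [TopologicalSpace β]

theorem subset_closure_inter_inter {S U V : Set α} (hU : IsOpen U)
    (hSU : S ⊆ closure (U ∩ S)) (hSV : S ⊆ closure (V ∩ S)) :
    S ⊆ closure (U ∩ V ∩ S) := by
  refine hSU.trans (closure_minimal ?_ isClosed_closure)
  calc U ∩ S ⊆ U ∩ closure (V ∩ S) := inter_subset_inter_right U hSV
    _ ⊆ closure (U ∩ (V ∩ S)) := hU.inter_closure
    _ = closure (U ∩ V ∩ S) := by rw [inter_assoc]

theorem Set.Finite.subset_closure_biInter_inter {ι : Type*} {I : Set ι} (hI : I.Finite)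
    {S : Set α} {W : ι → Set α} (hWo : ∀ i ∈ I, IsOpen (W i))
    (hW : ∀ i ∈ I, S ⊆ closure (W i ∩ S)) : S ⊆ closure ((⋂ i ∈ I, W i) ∩ S) := by
  induction I, hI using Set.Finite.induction_on with
  | empty => simpa using subset_closure
  | @insert a I _ _ ih =>
    rw [biInter_insert]
    exact subset_closure_inter_inter (hWo a (mem_insert a I)) (hW a (mem_insert a I))
      (ih (fun i hi => hWo i (mem_insert_of_mem a hi)) fun i hi => hW i (mem_insert_of_mem a hi))

theorem Homeomorph.subset_closure_preimage_inter (e : α ≃ₜ β) {S : Set α} {T W : Set β}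
    (hST : e ⁻¹' T = S) (hW : T ⊆ closure (W ∩ T)) : S ⊆ closure (e ⁻¹' W ∩ S) :=
  calc S = e ⁻¹' T := hST.symm
    _ ⊆ e ⁻¹' closure (W ∩ T) := preimage_mono hW
    _ = closure (e ⁻¹' W ∩ S) := by rw [e.preimage_closure, preimage_inter, hST]

theorem exists_isOpen_prod_subset_of_subset_closure {S : Set α} {T : Set β}
    {W : Set (α × β)} (hW : IsOpen W) (hWd : S ×ˢ T ⊆ closure (W ∩ S ×ˢ T))
    {A : Set α} {B : Set β} (hA : IsOpen A) (hB : IsOpen B) (hAS : (A ∩ S).Nonempty)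
    (hBT : (B ∩ T).Nonempty) :
    ∃ P Q, IsOpen P ∧ IsOpen Q ∧ P ⊆ A ∧ Q ⊆ B ∧ (P ∩ S).Nonempty ∧ (Q ∩ T).Nonempty ∧
      P ×ˢ Q ⊆ W := by
  obtain ⟨a, haA, haS⟩ := hAS
  obtain ⟨b, hbB, hbT⟩ := hBT
  obtain ⟨⟨c, d⟩, ⟨hcA, hdB⟩, hcdW, hcS, hdT⟩ :=
    mem_closure_iff.mp (hWd (mk_mem_prod haS hbT)) _ (hA.prod hB) (mk_mem_prod haA hbB)
  obtain ⟨u, v, hu, hv, hcu, hdv, huv⟩ := isOpen_prod_iff.mp hW c d hcdW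
  exact ⟨A ∩ u, B ∩ v, hA.inter hu, hB.inter hv, inter_subset_left, inter_subset_left,
    ⟨c, ⟨hcA, hcu⟩, hcS⟩, ⟨d, ⟨hdB, hdv⟩, hdT⟩,
    (prod_mono inter_subset_right inter_subset_right).trans huv⟩

theorem subset_closure_inter_prod_of_dense {S : Set α} {T : Set β} {V W : Set (α × β)}
    (hW : IsOpen W) (hVW : V ⊆ W)
    (hV : Dense {p : closure S × closure T | ((p.1 : α), (p.2 : β)) ∈ V}) :
    S ×ˢ T ⊆ closure (W ∩ S ×ˢ T) := by
  let ι : closure S × closure T → α × β := fun p => (p.1, p.2)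
  have hι : Continuous ι := by fun_prop
  have hιV : ι '' {p | ι p ∈ V} ⊆ W ∩ closure (S ×ˢ T) := by
    rintro _ ⟨p, hp, rfl⟩
    exact ⟨hVW hp, closure_prod_eq (s := S) (t := T) ▸ mk_mem_prod p.1.2 p.2.2⟩
  calc S ×ˢ T ⊆ range ι := fun p hp =>
        ⟨(⟨p.1, subset_closure hp.1⟩, ⟨p.2, subset_closure hp.2⟩), rfl⟩
    _ = ι '' closure {p | ι p ∈ V} := by rw [hV.closure_eq, image_univ]
    _ ⊆ closure (ι '' {p | ι p ∈ V}) := image_closure_subset_closure_image hι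
    _ ⊆ closure (W ∩ S ×ˢ T) := closure_minimal (hιV.trans hW.inter_closure) isClosed_closure

end DenseInProduct

theorem exists_isOpen_seq_subset_closure_of_isGδ {X : Type*} [TopologicalSpace X] {O : Set X}
    {V : ℕ → Set (X × X)} (hV : ∀ n, IsGδ (V n))
    (hd : ∀ n, Dense {p : closure O × closure O | ((p.1 : X), (p.2 : X)) ∈ V n}) :
    ∃ W : ℕ → Set (X × X), (∀ j, IsOpen (W j)) ∧ (∀ j, O ×ˢ O ⊆ closure (W j ∩ O ×ˢ O)) ∧
      ⋂ j, W j ⊆ ⋂ n, V n := by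
  choose f hfo hVf using fun n => isGδ_iff_eq_iInter_nat.mp (hV n)
  refine ⟨fun j => f j.unpair.1 j.unpair.2, fun j => hfo _ _, fun j =>
    subset_closure_inter_prod_of_dense (hfo _ _) ((hVf _).trans_subset (iInter_subset _ _)) (hd _),
    subset_iInter fun n => ?_⟩
  rw [hVf n]
  exact subset_iInter fun m => by
    simpa [Nat.unpair_pair] using iInter_subset (fun j => f j.unpair.1 j.unpair.2) (Nat.pair n m)

namespace ChoquetEmbedding

/-- Player B's move after the history `h`; before the game starts it is `univ`. -/
def response {X : Type*} (σ : List (Set X × X) → Set X) : List (Set X × X) → Set X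
  | [] => univ
  | m :: h => σ (m :: h)

theorem response_of_ne_nil {X : Type*} (σ : List (Set X × X) → Set X) {h : List (Set X × X)}
    (hh : h ≠ []) :
    response σ h = σ h := by
  cases h with
  | nil => exact absurd rfl hh
  | cons m h => rfl

variable {X : Type*} [TopologicalSpace X]

/- A `Level` holds the `U_i` and `γ_i` shared by all nodes of one level. Levels and nodes are
listed most recent first, so that the node `i :: s` of `L :: ℓ` is a child of the node `s` of `ℓ`;
only nodes with `s.length = ℓ.length` matter. `treeHist x₀ ℓ s` is player A's history along the
branch `s`. -/
structure Level (X : Type*) [TopologicalSpace X] where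
  U : Bool → Set X
  γ : Bool → X ≃ₜ X

instance : Nonempty (Level X) := ⟨⟨fun _ => univ, fun _ => Homeomorph.refl X⟩⟩

def treeHomeo : List (Level X) → List Bool → X ≃ₜ X
  | L :: ℓ, i :: s => (L.γ i).trans (treeHomeo ℓ s)
  | _, _ => Homeomorph.refl X

def treeSet : List (Level X) → List Bool → Set X
  | L :: ℓ, i :: s => treeHomeo ℓ s '' L.U i
  | _, _ => univ

def treeHist (x₀ : X) : List (Level X) → List Bool → List (Set X × X)
  | L :: ℓ, i :: s =>
      (treeSet (L :: ℓ) (i :: s), treeHomeo (L :: ℓ) (i :: s) x₀) :: treeHist x₀ ℓ s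
  | _, _ => []

def nodes (ℓ : List (Level X)) : Set (List Bool) := {s | s.length = ℓ.length}

@[simp] theorem mem_nodes {ℓ : List (Level X)} {s : List Bool} :
    s ∈ nodes ℓ ↔ s.length = ℓ.length :=
  Iff.rfl

theorem finite_nodes (ℓ : List (Level X)) : (nodes ℓ).Finite := List.finite_length_eq Bool _

def revPrefix (y : ℕ → Bool) : ℕ → List Bool
  | 0 => []
  | n + 1 => y n :: revPrefix y n

@[simp] theorem length_revPrefix (y : ℕ → Bool) (n : ℕ) : (revPrefix y n).length = n := by
  induction n with
  | zero => rfl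
  | succ n ih => simp [revPrefix, ih]

structure Setting (X : Type*) [TopologicalSpace X] where
  Γ : Set (X ≃ₜ X)
  O : Set X
  x₀ : X
  σ : List (Set X × X) → Set X
  W : ℕ → Set (X × X)
  isHomeoGroup : IsHomeoGroup Γ
  orbit_eq : O = {y : X | ∃ γ ∈ Γ, γ x₀ = y}
  σ_legal : ∀ (U : Set X) (x : X) (rest : List (Set X × X)), SCLegal O σ ((U, x) :: rest) →
    IsOpen (σ ((U, x) :: rest)) ∧ x ∈ σ ((U, x) :: rest) ∧ σ ((U, x) :: rest) ⊆ U
  σ_wins : ∀ f : ℕ → Set X × X, (∀ n : ℕ, SCLegal O σ (scHist f n)) →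
    (⋂ n : ℕ, σ (scHist f (n + 1))).Nonempty
  isOpen_W : ∀ j, IsOpen (W j)
  subset_closure_W : ∀ j, O ×ˢ O ⊆ closure (W j ∩ O ×ˢ O)

namespace Setting

variable (S : Setting X)

theorem x₀_mem : S.x₀ ∈ S.O := S.orbit_eq ▸ ⟨_, S.isHomeoGroup.1, rfl⟩

theorem preimage_orbit {γ : X ≃ₜ X} (hγ : γ ∈ S.Γ) : γ ⁻¹' S.O = S.O := by
  obtain ⟨-, hsymm, htrans⟩ := S.isHomeoGroup
  ext a
  rw [mem_preimage, S.orbit_eq]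
  constructor
  · rintro ⟨δ, hδ, hδa⟩
    exact ⟨δ.trans γ.symm, htrans _ hδ _ (hsymm _ hγ), by simp [hδa]⟩
  · rintro ⟨δ, hδ, rfl⟩
    exact ⟨δ.trans γ, htrans _ hδ _ hγ, rfl⟩

theorem apply_mem_orbit {γ : X ≃ₜ X} (hγ : γ ∈ S.Γ) {a : X} (ha : a ∈ S.O) : γ a ∈ S.O := by
  rwa [← mem_preimage, S.preimage_orbit hγ]

def IsLegalTree (ℓ : List (Level X)) : Prop :=
  ∀ s : List Bool, s.length = ℓ.length → SCLegal S.O S.σ (treeHist S.x₀ ℓ s) ∧ treeHomeo ℓ s ∈ S.Γ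

def commonResponse (ℓ : List (Level X)) : Set X :=
  ⋂ s ∈ nodes ℓ, treeHomeo ℓ s ⁻¹' response S.σ (treeHist S.x₀ ℓ s)

def commonTarget (ℓ : List (Level X)) : Set (X × X) :=
  ⋂ p ∈ nodes ℓ ×ˢ nodes ℓ ×ˢ Iic ℓ.length,
    Prod.map (treeHomeo ℓ p.1) (treeHomeo ℓ p.2.1) ⁻¹' S.W p.2.2

def IsAdmissibleLevel (R : Set X) (W : Set (X × X)) (L : Level X) : Prop :=
  (∀ i, IsOpen (L.U i) ∧ L.γ i ∈ S.Γ ∧ L.γ i S.x₀ ∈ L.U i ∧ closure (L.U i) ⊆ R) ∧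
    ∀ i, L.U i ×ˢ L.U (!i) ⊆ W

theorem exists_isAdmissibleLevel [RegularSpace X] {R : Set X} {W : Set (X × X)} (hR : IsOpen R)
    (hx₀ : S.x₀ ∈ R) (hW : IsOpen W) (hWd : S.O ×ˢ S.O ⊆ closure (W ∩ S.O ×ˢ S.O)) :
    ∃ L, S.IsAdmissibleLevel R W L := by
  have hRO : (R ∩ S.O).Nonempty := ⟨S.x₀, hx₀, S.x₀_mem⟩
  obtain ⟨P₀, P₁, hP₀, hP₁, hP₀R, hP₁R, hP₀O, hP₁O, hP⟩ :=
    exists_isOpen_prod_subset_of_subset_closure hW hWd hR hR hRO hRO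
  -- refining a second time with the roles swapped gives both `Q₀ × Q₁ ⊆ W` and `Q₁ × Q₀ ⊆ W`
  obtain ⟨Q₁, Q₀, hQ₁, hQ₀, hQ₁P, hQ₀P, hQ₁O, hQ₀O, hQ⟩ :=
    exists_isOpen_prod_subset_of_subset_closure hW hWd hP₁ hP₀ hP₁O hP₀O
  have hQi : ∀ i : Bool, IsOpen (cond i Q₁ Q₀) ∧ cond i Q₁ Q₀ ⊆ R ∧ (cond i Q₁ Q₀ ∩ S.O).Nonempty
    | false => ⟨hQ₀, hQ₀P.trans hP₀R, hQ₀O⟩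
    | true => ⟨hQ₁, hQ₁P.trans hP₁R, hQ₁O⟩
  have hnode : ∀ i : Bool, ∃ (U : Set X) (γ : X ≃ₜ X),
      (IsOpen U ∧ γ ∈ S.Γ ∧ γ S.x₀ ∈ U ∧ closure U ⊆ R) ∧ U ⊆ cond i Q₁ Q₀ := by
    intro i
    obtain ⟨hQo, hQR, a, haQ, haO⟩ := hQi i
    obtain ⟨γ, hγ, rfl⟩ : ∃ γ ∈ S.Γ, γ S.x₀ = a := by rw [S.orbit_eq] at haO; exact haO
    obtain ⟨U, ⟨haU, hU⟩, hUQ⟩ := (hasBasis_opens_closure _).mem_iff.mp (hQo.mem_nhds haQ)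
    exact ⟨U, γ, ⟨hU, hγ, haU, hUQ.trans hQR⟩, subset_closure.trans hUQ⟩
  choose U γ hgood hUQ using hnode
  refine ⟨⟨U, γ⟩, hgood, ?_⟩
  rintro (_ | _)
  · exact (prod_mono (hUQ false) (hUQ true)).trans ((prod_mono hQ₀P hQ₁P).trans hP)
  · exact (prod_mono (hUQ true) (hUQ false)).trans hQ

variable {S}

theorem response_spec {ℓ : List (Level X)} (hℓ : S.IsLegalTree ℓ) {s : List Bool}
    (hs : s.length = ℓ.length) :
    IsOpen (treeSet ℓ s) ∧ IsOpen (response S.σ (treeHist S.x₀ ℓ s)) ∧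
      treeHomeo ℓ s S.x₀ ∈ response S.σ (treeHist S.x₀ ℓ s) ∧
      response S.σ (treeHist S.x₀ ℓ s) ⊆ treeSet ℓ s := by
  cases ℓ with
  | nil =>
    obtain rfl : s = [] := List.eq_nil_of_length_eq_zero hs
    exact ⟨isOpen_univ, isOpen_univ, mem_univ _, subset_rfl⟩
  | cons L ℓ =>
    obtain ⟨i, s, rfl⟩ := List.exists_cons_of_length_eq_add_one hs
    have hlegal := (hℓ _ hs).1
    exact ⟨hlegal.2.1, S.σ_legal _ _ _ hlegal⟩

theorem isOpen_commonResponse {ℓ : List (Level X)} (hℓ : S.IsLegalTree ℓ) :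
    IsOpen (S.commonResponse ℓ) :=
  (finite_nodes ℓ).isOpen_biInter fun _ hs =>
    (response_spec hℓ hs).2.1.preimage (treeHomeo ℓ _).continuous

theorem x₀_mem_commonResponse {ℓ : List (Level X)} (hℓ : S.IsLegalTree ℓ) :
    S.x₀ ∈ S.commonResponse ℓ :=
  mem_iInter₂.mpr fun _ hs => (response_spec hℓ hs).2.2.1

theorem isOpen_commonTarget (ℓ : List (Level X)) : IsOpen (S.commonTarget ℓ) :=
  ((finite_nodes ℓ).prod ((finite_nodes ℓ).prod (finite_Iic _))).isOpen_biInter fun p _ =>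
    (S.isOpen_W _).preimage ((treeHomeo ℓ p.1).prodCongr (treeHomeo ℓ p.2.1)).continuous

theorem subset_closure_commonTarget {ℓ : List (Level X)} (hℓ : S.IsLegalTree ℓ) :
    S.O ×ˢ S.O ⊆ closure (S.commonTarget ℓ ∩ S.O ×ˢ S.O) :=
  ((finite_nodes ℓ).prod ((finite_nodes ℓ).prod (finite_Iic _))).subset_closure_biInter_inter
    (fun p _ =>
      (S.isOpen_W _).preimage ((treeHomeo ℓ p.1).prodCongr (treeHomeo ℓ p.2.1)).continuous)
    fun p hp => ((treeHomeo ℓ p.1).prodCongr (treeHomeo ℓ p.2.1)).subset_closure_preimage_inter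
      (by rw [Homeomorph.coe_prodCongr, preimage_prod_map_prod, S.preimage_orbit (hℓ _ hp.1).2,
        S.preimage_orbit (hℓ _ hp.2.1).2]) (S.subset_closure_W _)

theorem closure_treeSet_cons_subset {ℓ : List (Level X)} {L : Level X} {i : Bool}
    (hL : closure (L.U i) ⊆ S.commonResponse ℓ) {s : List Bool} (hs : s.length = ℓ.length) :
    closure (treeSet (L :: ℓ) (i :: s)) ⊆ response S.σ (treeHist S.x₀ ℓ s) := by
  rw [treeSet, ← Homeomorph.image_closure, image_subset_iff]
  exact hL.trans (biInter_subset_of_mem (t := fun s => treeHomeo ℓ s ⁻¹' _) hs)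

theorem isLegalTree_nil : S.IsLegalTree [] := by
  rintro (_ | _) hs
  · exact ⟨trivial, S.isHomeoGroup.1⟩
  · simp at hs

theorem IsLegalTree.cons {ℓ : List (Level X)} (hℓ : S.IsLegalTree ℓ) {L : Level X}
    (hL : S.IsAdmissibleLevel (S.commonResponse ℓ) (S.commonTarget ℓ) L) :
    S.IsLegalTree (L :: ℓ) := by
  rintro (_ | ⟨i, s⟩) hs
  · simp at hs
  have hs : s.length = ℓ.length := by simpa using hs
  obtain ⟨hU, hγ, hx, hUR⟩ := hL.1 i
  obtain ⟨hlegal, hg⟩ := hℓ s hs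
  refine ⟨⟨hlegal, (treeHomeo ℓ s).isOpenMap _ hU, mem_image_of_mem _ hx,
    S.apply_mem_orbit hg (S.apply_mem_orbit hγ S.x₀_mem), fun hne => ?_⟩,
    S.isHomeoGroup.2.2 _ hγ _ hg⟩
  rw [← response_of_ne_nil S.σ hne]
  exact subset_closure.trans (closure_treeSet_cons_subset hUR hs)

variable (S)

noncomputable def nextLevel (ℓ : List (Level X)) : Level X :=
  Classical.epsilon (S.IsAdmissibleLevel (S.commonResponse ℓ) (S.commonTarget ℓ))

noncomputable def levels : ℕ → List (Level X)
  | 0 => []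
  | n + 1 => S.nextLevel (levels n) :: levels n

@[simp] theorem length_levels (n : ℕ) : (S.levels n).length = n := by
  induction n with
  | zero => rfl
  | succ n ih => simp [levels, ih]

variable {S}

theorem isAdmissibleLevel_nextLevel [RegularSpace X] {ℓ : List (Level X)} (hℓ : S.IsLegalTree ℓ) :
    S.IsAdmissibleLevel (S.commonResponse ℓ) (S.commonTarget ℓ) (S.nextLevel ℓ) :=
  Classical.epsilon_spec (S.exists_isAdmissibleLevel (isOpen_commonResponse hℓ)
    (x₀_mem_commonResponse hℓ) (S.isOpen_commonTarget ℓ) (subset_closure_commonTarget hℓ))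

theorem isLegalTree_levels [RegularSpace X] (n : ℕ) : S.IsLegalTree (S.levels n) := by
  induction n with
  | zero => exact isLegalTree_nil
  | succ n ih => exact ih.cons (isAdmissibleLevel_nextLevel ih)

variable (S)

def cell (y : ℕ → Bool) (n : ℕ) : Set X := treeSet (S.levels n) (revPrefix y n)

def limitSet (y : ℕ → Bool) : Set X := ⋂ n, closure (S.cell y n)

theorem cell_succ (y : ℕ → Bool) (n : ℕ) :
    S.cell y (n + 1) =
      treeHomeo (S.levels n) (revPrefix y n) '' (S.nextLevel (S.levels n)).U (y n) :=
  rfl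

theorem isClosed_limitSet (y : ℕ → Bool) : IsClosed (S.limitSet y) :=
  isClosed_iInter fun _ => isClosed_closure

theorem treeHomeo_levels_eq_trans {y z : ℕ → Bool} {N : ℕ} (hyz : ∀ n ≥ N, y n = z n) {n : ℕ}
    (hn : N ≤ n) :
    treeHomeo (S.levels n) (revPrefix y n) = (treeHomeo (S.levels n) (revPrefix z n)).trans
      ((treeHomeo (S.levels N) (revPrefix z N)).symm.trans
        (treeHomeo (S.levels N) (revPrefix y N))) := by
  induction n, hn using Nat.le_induction with
  | base => ext x; simp
  | succ n hn ih =>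
    change ((S.nextLevel (S.levels n)).γ (y n)).trans (treeHomeo (S.levels n) (revPrefix y n)) =
      (((S.nextLevel (S.levels n)).γ (z n)).trans (treeHomeo (S.levels n) (revPrefix z n))).trans _
    rw [hyz n hn, ih]
    rfl

variable [RegularSpace X] (y : ℕ → Bool)

theorem isOpen_cell (n : ℕ) : IsOpen (S.cell y n) :=
  (response_spec (S.isLegalTree_levels n) (by simp)).1

theorem closure_cell_succ_subset (n : ℕ) : closure (S.cell y (n + 1)) ⊆ S.cell y n :=
  (closure_treeSet_cons_subset ((isAdmissibleLevel_nextLevel (S.isLegalTree_levels n)).1 _).2.2.2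
    (by simp)).trans (response_spec (S.isLegalTree_levels n) (by simp)).2.2.2

theorem antitone_closure_cell : Antitone fun n => closure (S.cell y n) :=
  antitone_nat_of_succ_le fun n => (S.closure_cell_succ_subset y n).trans subset_closure

theorem limitSet_eq_iInter_cell : S.limitSet y = ⋂ n, S.cell y n :=
  Subset.antisymm
    (subset_iInter fun n => (iInter_subset _ (n + 1)).trans (S.closure_cell_succ_subset y n))
    (iInter_mono fun _ => subset_closure)

theorem limitSet_nonempty : (S.limitSet y).Nonempty := by
  let f : ℕ → Set X × X := fun k =>
    (S.cell y (k + 1), treeHomeo (S.levels (k + 1)) (revPrefix y (k + 1)) S.x₀)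
  have hf : ∀ k, scHist f k = treeHist S.x₀ (S.levels k) (revPrefix y k) := by
    intro k
    induction k with
    | zero => rfl
    | succ k ih => rw [scHist, ih]; rfl
  obtain ⟨x, hx⟩ := S.σ_wins f fun k => hf k ▸ (S.isLegalTree_levels k _ (by simp)).1
  rw [limitSet_eq_iInter_cell]
  refine ⟨x, mem_iInter.mpr fun n => ?_⟩
  rcases n with _ | n
  · exact mem_univ x
  · have hxn := mem_iInter.mp hx n
    rw [hf] at hxn
    exact (response_spec (S.isLegalTree_levels (n + 1)) (by simp)).2.2.2 hxn

theorem isGδ_limitSet : IsGδ (S.limitSet y) := by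
  rw [limitSet_eq_iInter_cell]
  exact IsGδ.iInter fun n => (S.isOpen_cell y n).isGδ

theorem limitSet_subset_cell (n : ℕ) : S.limitSet y ⊆ S.cell y n :=
  S.limitSet_eq_iInter_cell y ▸ iInter_subset _ n

variable {y}

theorem exists_image_limitSet_eq {z : ℕ → Bool} (h : E0 y z) :
    ∃ γ ∈ S.Γ, γ '' S.limitSet z = S.limitSet y := by
  obtain ⟨N, hN⟩ := h
  set γ := (treeHomeo (S.levels N) (revPrefix z N)).symm.trans
    (treeHomeo (S.levels N) (revPrefix y N))
  have hcell : ∀ n, closure (S.cell y (n + (N + 1))) = γ '' closure (S.cell z (n + (N + 1))) := by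
    intro n
    rw [γ.image_closure, ← add_assoc, cell_succ, cell_succ,
      S.treeHomeo_levels_eq_trans hN (by omega : N ≤ n + N), hN _ (by omega),
      image_image]
    rfl
  refine ⟨γ, S.isHomeoGroup.2.2 _ (S.isHomeoGroup.2.1 _ (S.isLegalTree_levels N _ (by simp)).2) _
    (S.isLegalTree_levels N _ (by simp)).2, ?_⟩
  simp only [limitSet, ← (S.antitone_closure_cell y).iInter_nat_add (N + 1),
    ← (S.antitone_closure_cell z).iInter_nat_add (N + 1), image_iInter γ.bijective, hcell]

theorem cell_succ_prod_subset {z : ℕ → Bool} {n j : ℕ} (hjn : j ≤ n) (hyz : y n ≠ z n) :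
    S.cell y (n + 1) ×ˢ S.cell z (n + 1) ⊆ S.W j := by
  rw [cell_succ, cell_succ, Bool.eq_not.mpr hyz.symm]
  rintro ⟨_, _⟩ ⟨⟨u, hu, rfl⟩, ⟨v, hv, rfl⟩⟩
  have huv := (isAdmissibleLevel_nextLevel (S.isLegalTree_levels n)).2 (y n) (mk_mem_prod hu hv)
  exact mem_iInter₂.mp huv (revPrefix y n, revPrefix z n, j) ⟨by simp, by simp, by simpa using hjn⟩

theorem limitSet_prod_subset {z : ℕ → Bool} (h : ¬ E0 y z) :
    S.limitSet y ×ˢ S.limitSet z ⊆ ⋂ j, S.W j := by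
  unfold E0 at h
  push Not at h
  refine subset_iInter fun j => ?_
  obtain ⟨n, hjn, hne⟩ := h j
  exact (prod_mono (S.limitSet_subset_cell y (n + 1)) (S.limitSet_subset_cell z (n + 1))).trans
    (S.cell_succ_prod_subset hjn hne)

end Setting

end ChoquetEmbedding

/-- the Choquet-space analog of the meager embedding theorem. -/
theorem stmt_11 {X : Type*} [TopologicalSpace X] [RegularSpace X]
    (Γ : Set (X ≃ₜ X)) (hΓ : IsHomeoGroup Γ)
    (O : Set X) (hO : ∃ x₀ : X, O = {y : X | ∃ γ ∈ Γ, γ x₀ = y})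
    (hChoquet : StrongChoquetOver X O)
    (V : ℕ → Set (X × X)) (hGδ : ∀ n : ℕ, IsGδ (V n))
    (hdense : ∀ n : ℕ,
      Dense {p : ↥(closure O) × ↥(closure O) | ((p.1 : X), (p.2 : X)) ∈ V n}) :
    ∃ φ : (ℕ → Bool) → Set X,
      (∀ y : ℕ → Bool, (φ y).Nonempty ∧ IsClosed (φ y) ∧ IsGδ (φ y)) ∧
      (∀ y z : ℕ → Bool, E0 y z → ∃ γ ∈ Γ, γ '' (φ z) = φ y) ∧
      (∀ y z : ℕ → Bool, ¬ E0 y z → (φ y) ×ˢ (φ z) ⊆ ⋂ n : ℕ, V n) := by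
  obtain ⟨x₀, hO⟩ := hO
  obtain ⟨σ, hσ, hσwins⟩ := hChoquet
  obtain ⟨W, hWo, hWd, hWV⟩ := exists_isOpen_seq_subset_closure_of_isGδ hGδ hdense
  let S : ChoquetEmbedding.Setting X := ⟨Γ, O, x₀, σ, W, hΓ, hO, hσ, hσwins, hWo, hWd⟩
  exact ⟨S.limitSet, fun y => ⟨S.limitSet_nonempty y, S.isClosed_limitSet y, S.isGδ_limitSet y⟩,
    fun _ _ h => S.exists_image_limitSet_eq h, fun _ _ h => (S.limitSet_prod_subset h).trans hWV⟩
end
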